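/- Let Σ=(Γ,σ) be a signed graph with an orientation ω compatible with σ and let G be a finite additive abelian group. Then: (i) a map f: E → G is a G-tension of Σ if and only if for every positive closed walk W=(v₁,e₁,…,v_k,e_k,v₁) one has Σ_{i=1}^k (ω(v_i,e_i)·Π_{j=1}^{i−1}σ(e_j))·f(e_i) = 0; and (ii) f is a G-potential difference of Σ if and only if f is a G-tension and for every negative closed walk W=(v₁,e₁,…,v_k,e_k,v₁) one has Σ_{i=1}^k f(e_i) ∈ 2G. -/

import Mathlib

attribute [local instance] Classical.propDecidable

noncomputable section SignedGraphs

/-- A signed graph: a multigraph with ordered pairs of endpoints (the order is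
an artefact of the encoding) together with a sign `±1` on each edge. -/
structure SGraph (V : Type*) (E : Type*) where
  ends : E → V × V
  sign : E → ℤˣ

namespace SGraph

variable {V E : Type*}

/-- Endpoint of `e` on side `b`; a loop has both endpoints equal, but its two
half-edges are distinguished by the side `b`. -/
def endpt (Γ : SGraph V E) (e : E) (b : Bool) : V :=
  cond b (Γ.ends e).1 (Γ.ends e).2

/-- `e` is a loop of the underlying graph. -/
def IsLoop (Γ : SGraph V E) (e : E) : Prop := (Γ.ends e).1 = (Γ.ends e).2

/-- Walks in a signed multigraph: a step traverses an edge `e` in direction `d`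
(from the side-`d` endpoint to the other endpoint). -/
inductive Walk (Γ : SGraph V E) : V → V → Type _
  | nil (v : V) : Walk Γ v v
  | cons (e : E) (d : Bool) {w : V} (p : Walk Γ (Γ.endpt e (!d)) w) : Walk Γ (Γ.endpt e d) w

namespace Walk

variable {Γ : SGraph V E}

/-- The list of vertices visited by a walk (including the final one). -/
def verts : ∀ {u v : V}, Γ.Walk u v → List V
  | _, _, .nil x => [x]
  | _, _, .cons e d p => Γ.endpt e d :: p.verts

/-- The list of edges traversed by a walk. -/
def edges : ∀ {u v : V}, Γ.Walk u v → List E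
  | _, _, .nil _ => []
  | _, _, .cons e _ p => e :: p.edges

/-- The list of (edge, direction) steps of a walk. -/
def steps : ∀ {u v : V}, Γ.Walk u v → List (E × Bool)
  | _, _, .nil _ => []
  | _, _, .cons e d p => (e, d) :: p.steps

/-- The sources of the steps of a walk, i.e. all visited vertices except the last. -/
def srcs {u v : V} (W : Γ.Walk u v) : List V := W.verts.dropLast

/-- The sign of a walk: the product of the signs of its edges. -/
def sgn : ∀ {u v : V}, Γ.Walk u v → ℤˣ
  | _, _, .nil _ => 1
  | _, _, .cons e _ p => Γ.sign e * p.sgn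

/-- Concatenation of walks. -/
def append : ∀ {u v w : V}, Γ.Walk u v → Γ.Walk v w → Γ.Walk u w
  | _, _, _, .nil _, q => q
  | _, _, _, .cons e d p, q => .cons e d (p.append q)

/-- The sum `Σᵢ f(eᵢ)` of the values of `f` on the edges of the walk,
with multiplicity. -/
def edgeSum {G : Type*} [AddCommGroup G] (f : E → G) {u v : V} (W : Γ.Walk u v) : G :=
  (W.edges.map f).sum

/-- The sum `Σᵢ ω(vᵢ,eᵢ)·(Π_{j<i} σ(eⱼ))·f(eᵢ)` along a walk, where `ω(vᵢ,eᵢ)`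
is the value of `ω` on the half-edge by which the walk leaves `vᵢ`. -/
def tensionSum {G : Type*} [AddCommGroup G] (ω : E → Bool → ℤˣ) (f : E → G) :
    ∀ {u v : V}, Γ.Walk u v → G
  | _, _, .nil _ => 0
  | _, _, .cons e d p => ((ω e d : ℤ) • f e) + ((Γ.sign e : ℤ) • tensionSum ω f p)

/-- `Q` is the reverse of the walk `P`. -/
def IsReverseOf {u v : V} (Q : Γ.Walk v u) (P : Γ.Walk u v) : Prop :=
  Q.steps = P.steps.reverse.map fun s => (s.1, !s.2)

end Walk

/-- A closed walk is a cycle if it is nontrivial, visits no vertex twice and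
uses no edge twice. -/
def IsCycle (Γ : SGraph V E) {v : V} (W : Γ.Walk v v) : Prop :=
  W.edges ≠ [] ∧ W.srcs.Nodup ∧ W.edges.Nodup

/-- A balanced (positive) cycle. -/
def IsBalancedCycle (Γ : SGraph V E) {v : V} (W : Γ.Walk v v) : Prop :=
  Γ.IsCycle W ∧ W.sgn = 1

/-- An unbalanced (negative) cycle. -/
def IsUnbalancedCycle (Γ : SGraph V E) {v : V} (W : Γ.Walk v v) : Prop :=
  Γ.IsCycle W ∧ W.sgn = -1

/-- A nontrivial walk that is a simple path (all visited vertices distinct). -/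
def IsPathWalk (Γ : SGraph V E) {u v : V} (P : Γ.Walk u v) : Prop :=
  P.edges ≠ [] ∧ P.verts.Nodup

/-- A tight handcuff at `v`: two edge-disjoint unbalanced cycles sharing exactly
the vertex `v`. -/
def IsTightHandcuff (Γ : SGraph V E) {v : V} (C₁ C₂ : Γ.Walk v v) : Prop :=
  Γ.IsUnbalancedCycle C₁ ∧ Γ.IsUnbalancedCycle C₂ ∧
    (∀ x ∈ C₁.srcs, x ∈ C₂.srcs → x = v) ∧ ∀ e ∈ C₁.edges, e ∉ C₂.edges

/-- A loose handcuff: two vertex-disjoint unbalanced cycles `C₁` (at `u`) and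
`C₂` (at `w`) joined by a simple path `P` from `u` to `w` meeting the cycles
exactly in its endpoints. -/
def IsLooseHandcuff (Γ : SGraph V E) {u w : V} (C₁ : Γ.Walk u u) (P : Γ.Walk u w)
    (C₂ : Γ.Walk w w) : Prop :=
  Γ.IsUnbalancedCycle C₁ ∧ Γ.IsUnbalancedCycle C₂ ∧ Γ.IsPathWalk P ∧
    (∀ x ∈ C₁.srcs, x ∉ C₂.srcs) ∧
    (∀ x ∈ P.verts, x ∈ C₁.srcs → x = u) ∧
    (∀ x ∈ P.verts, x ∈ C₂.srcs → x = w) ∧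
    ∀ e ∈ P.edges, e ∉ C₁.edges ∧ e ∉ C₂.edges

/-- The canonical closed walks traversing a circuit of the signed graph:
a balanced cycle, a tight handcuff `C₁ * C₂`, or a loose handcuff
`C₁ * P * C₂ * P⁻¹` (the circuit path edges being used twice). -/
def IsBasicCircuitWalk (Γ : SGraph V E) {v : V} (W : Γ.Walk v v) : Prop :=
  Γ.IsBalancedCycle W ∨
    (∃ C₁ C₂ : Γ.Walk v v, Γ.IsTightHandcuff C₁ C₂ ∧ W = C₁.append C₂) ∨
    ∃ (w : V) (C₁ : Γ.Walk v v) (P : Γ.Walk v w) (C₂ : Γ.Walk w w) (Q : Γ.Walk w v),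
      Γ.IsLooseHandcuff C₁ P C₂ ∧ Q.IsReverseOf P ∧
        W = C₁.append (P.append (C₂.append Q))

/-- A circuit walk: a rotation of a basic circuit walk. -/
def IsCircuitWalk (Γ : SGraph V E) {v : V} (W : Γ.Walk v v) : Prop :=
  ∃ (u : V) (A : Γ.Walk u v) (B : Γ.Walk v u),
    W = B.append A ∧ Γ.IsBasicCircuitWalk (A.append B)

/-- `e` is a circuit path edge: it lies on the connecting path of an unbalanced
loose handcuff. -/
def IsCircuitPathEdge (Γ : SGraph V E) (e : E) : Prop :=
  ∃ (u w : V) (C₁ : Γ.Walk u u) (P : Γ.Walk u w) (C₂ : Γ.Walk w w),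
    Γ.IsLooseHandcuff C₁ P C₂ ∧ e ∈ P.edges

/-- Adjacency via an edge. -/
def Adj (Γ : SGraph V E) (a b : V) : Prop := ∃ e, Γ.ends e = (a, b) ∨ Γ.ends e = (b, a)

/-- The set of connected components. -/
def Components (Γ : SGraph V E) : Type _ := Quot Γ.Adj

/-- The connected component of a vertex. -/
def comp (Γ : SGraph V E) (v : V) : Γ.Components := Quot.mk _ v

/-- The number `k(Γ)` of connected components. -/
def kAll (Γ : SGraph V E) : ℕ := Nat.card Γ.Components

/-- A connected component is balanced if every cycle it contains is balanced. -/
def IsBalancedComponent (Γ : SGraph V E) (c : Γ.Components) : Prop :=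
  ∀ v : V, Γ.comp v = c → ∀ W : Γ.Walk v v, Γ.IsCycle W → W.sgn = 1

/-- The number `k_b(Σ)` of balanced connected components. -/
def kb (Γ : SGraph V E) : ℕ := Nat.card {c : Γ.Components // Γ.IsBalancedComponent c}

/-- The number `k_u(Σ)` of unbalanced connected components. -/
def ku (Γ : SGraph V E) : ℕ := Nat.card {c : Γ.Components // ¬ Γ.IsBalancedComponent c}

/-- A signed graph is balanced if all its cycles are balanced. -/
def Balanced (Γ : SGraph V E) : Prop :=
  ∀ (v : V) (W : Γ.Walk v v), Γ.IsCycle W → W.sgn = 1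

/-- A signed graph is connected if it has exactly one connected component. -/
def Connected (Γ : SGraph V E) : Prop := Γ.kAll = 1

/-- The spanning subgraph `Σ \ Aᶜ` with edge set `A`. -/
def restrict (Γ : SGraph V E) (A : Set E) : SGraph V A :=
  { ends := fun e => Γ.ends e, sign := fun e => Γ.sign e }

/-- The signed Tutte polynomial (as a function of `x`, `y`, `z`):
`T_Σ(X,Y,Z) = Σ_{A⊆E} (X−1)^{k(Σ\Aᶜ)−k(Σ)} (Y−1)^{|A|−|V|+k_b(Σ\Aᶜ)} (Z−1)^{k_u(Σ\Aᶜ)}`. -/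
def signedTutte {K : Type*} [CommRing K] (Γ : SGraph V E) (x y z : K) : K :=
  ∑ᶠ A : Finset E,
    (x - 1) ^ ((Γ.restrict (A : Set E)).kAll - Γ.kAll) *
      (y - 1) ^ ((A.card + (Γ.restrict (A : Set E)).kb) - Nat.card V) *
        (z - 1) ^ (Γ.restrict (A : Set E)).ku

/-- Deletion of an edge. -/
def deleteEdge (Γ : SGraph V E) (e : E) : SGraph V {e' : E // e' ≠ e} :=
  { ends := fun e' => Γ.ends e'.1, sign := fun e' => Γ.sign e'.1 }

/-- The relation identifying the two endpoints of `e`. -/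
def contractRel (Γ : SGraph V E) (e : E) (a b : V) : Prop := (a, b) = Γ.ends e

/-- Contraction of an edge: the two endpoints are identified and the edge is
deleted.  (For a loop this is just deletion, as the identification is trivial.) -/
def contract (Γ : SGraph V E) (e : E) : SGraph (Quot (Γ.contractRel e)) {e' : E // e' ≠ e} :=
  { ends := fun e' => (Quot.mk _ (Γ.ends e'.1).1, Quot.mk _ (Γ.ends e'.1).2),
    sign := fun e' => Γ.sign e'.1 }

/-- `e` is a bridge: its deletion increases the number of connected components. -/
def IsBridge (Γ : SGraph V E) (e : E) : Prop := Γ.kAll < (Γ.deleteEdge e).kAll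

/-- An orientation of the half-edges, compatible with the signature. -/
def IsCompatible (Γ : SGraph V E) (ω : E → Bool → ℤˣ) : Prop :=
  ∀ e, Γ.sign e = -(ω e true * ω e false)

/-- A `G`-flow: Kirchhoff's law holds at every vertex. -/
def IsFlow (Γ : SGraph V E) (ω : E → Bool → ℤˣ) {G : Type*} [AddCommGroup G]
    (f : E → G) : Prop :=
  ∀ v : V,
    (∑ᶠ e : E, ((if Γ.endpt e true = v then (ω e true : ℤ) • f e else 0) +
      (if Γ.endpt e false = v then (ω e false : ℤ) • f e else 0))) = 0

/-- A `G`-tension: the alternating sum along every circuit walk vanishes. -/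
def IsTension (Γ : SGraph V E) (ω : E → Bool → ℤˣ) {G : Type*} [AddCommGroup G]
    (f : E → G) : Prop :=
  ∀ (v : V) (W : Γ.Walk v v), Γ.IsCircuitWalk W → W.tensionSum ω f = 0

end SGraph

/-- The doubling homomorphism `x ↦ x + x = 2x` of an abelian group. -/
def doubleHom (G : Type*) [AddCommGroup G] : G →+ G :=
  AddMonoidHom.mk' (fun x => x + x) (fun a b => add_add_add_comm a b a b)

/-- The subgroup `2G = {2x : x ∈ G}`. -/
def twoG (G : Type*) [AddCommGroup G] : AddSubgroup G := (doubleHom G).range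

/-- The `2`-torsion subgroup `G₂ = {x ∈ G : 2x = 0}`. -/
def torsion2 (G : Type*) [AddCommGroup G] : AddSubgroup G := (doubleHom G).ker

namespace SGraph

variable {V E : Type*}

/-- A `G`-potential difference: a `G`-tension whose sum around every unbalanced
cycle lies in `2G`. -/
def IsPotentialDifference (Γ : SGraph V E) (ω : E → Bool → ℤˣ) {G : Type*} [AddCommGroup G]
    (f : E → G) : Prop :=
  Γ.IsTension ω f ∧
    ∀ (v : V) (W : Γ.Walk v v), Γ.IsUnbalancedCycle W → W.edgeSum f ∈ twoG G

end SGraph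

namespace SGraph

variable {V E : Type*}

/-- Proper coloring by elements of a set `X` with involution `ι`: adjacent
endpoints of a positive edge get different colors, and for a negative edge the
`ι`-image of one endpoint's color differs from the other endpoint's color. -/
def IsProperInvColoring (Γ : SGraph V E) {X : Type*} (ι : X → X) (f : V → X) : Prop :=
  ∀ e : E, (Γ.sign e = 1 → f ((Γ.ends e).1) ≠ f ((Γ.ends e).2)) ∧
    (Γ.sign e = -1 → ι (f ((Γ.ends e).1)) ≠ f ((Γ.ends e).2))

/-- A proper `G`-coloring: for every edge `e = uv`, `f(u) ≠ f(v)` if `e` is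
positive and `-f(u) ≠ f(v)` if `e` is negative, i.e. `σ(e)•f(u) ≠ f(v)`. -/
def IsProperColoring (Γ : SGraph V E) {G : Type*} [AddCommGroup G] (f : V → G) : Prop :=
  ∀ e : E, ((Γ.sign e : ℤ) • f ((Γ.ends e).1)) ≠ f ((Γ.ends e).2)

/-- Zaslavsky's proper `n`-coloring: colors in `{0, ±1, …, ±n}` with
`f(u) ≠ σ(e)·f(v)` for every edge `e = uv`. -/
def IsProperNColoring (Γ : SGraph V E) (n : ℕ) (f : V → ℤ) : Prop :=
  (∀ v, |f v| ≤ (n : ℤ)) ∧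
    ∀ e : E, f ((Γ.ends e).1) ≠ (Γ.sign e : ℤ) * f ((Γ.ends e).2)

/-- `T ⊆ E` is a spanning tree: the spanning subgraph `(V,T)` is connected and
contains no cycle. -/
def IsSpanningTree (Γ : SGraph V E) (T : Set E) : Prop :=
  (Γ.restrict T).Connected ∧
    ∀ (v : V) (W : (Γ.restrict T).Walk v v), ¬ (Γ.restrict T).IsCycle W

/-- A connected basis of a connected signed graph: a spanning tree if `Σ` is
balanced; otherwise a spanning tree plus one extra edge closing an unbalanced
cycle. -/
def IsConnectedBasis (Γ : SGraph V E) (B : Set E) : Prop :=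
  (Γ.Balanced ∧ Γ.IsSpanningTree B) ∨
    (¬ Γ.Balanced ∧ ∃ (T : Set E) (e : E), Γ.IsSpanningTree T ∧ e ∉ T ∧ B = insert e T ∧
      ∀ (v : V) (W : (Γ.restrict B).Walk v v), (Γ.restrict B).IsCycle W → W.sgn = -1)

/-- Switching at a vertex `v`: the sign of every non-loop edge incident with `v`
is negated; loops keep their sign. -/
def switchAt (Γ : SGraph V E) (v : V) : SGraph V E :=
  { ends := Γ.ends,
    sign := fun e => if ((Γ.ends e).1 = v ↔ (Γ.ends e).2 = v) then Γ.sign e else -Γ.sign e }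

/-- Switching at a set `S` of vertices (the composite of the switchings at the
vertices of `S`): the sign of an edge is negated iff exactly one of its
endpoints lies in `S`. -/
def switchSet (Γ : SGraph V E) (S : Set V) : SGraph V E :=
  { ends := Γ.ends,
    sign := fun e => if ((Γ.ends e).1 ∈ S ↔ (Γ.ends e).2 ∈ S) then Γ.sign e else -Γ.sign e }

/-- Isomorphism of signed graphs (as undirected signed multigraphs). -/
def Iso {V₁ E₁ V₂ E₂ : Type*} (Γ₁ : SGraph V₁ E₁) (Γ₂ : SGraph V₂ E₂) : Prop :=
  ∃ (φ : V₁ ≃ V₂) (ψ : E₁ ≃ E₂), ∀ e : E₁,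
    (Γ₂.ends (ψ e) = (φ (Γ₁.ends e).1, φ (Γ₁.ends e).2) ∨
      Γ₂.ends (ψ e) = (φ (Γ₁.ends e).2, φ (Γ₁.ends e).1)) ∧
    Γ₂.sign (ψ e) = Γ₁.sign e

/-- Switching equivalence: isomorphism after switching at a set of vertices. -/
def SwitchEquiv {V₁ E₁ V₂ E₂ : Type*} (Γ₁ : SGraph V₁ E₁) (Γ₂ : SGraph V₂ E₂) : Prop :=
  ∃ S : Set V₁, Iso (Γ₁.switchSet S) Γ₂

/-- Disjoint union of signed graphs. -/
def disjUnion {V₁ E₁ V₂ E₂ : Type*} (Γ₁ : SGraph V₁ E₁) (Γ₂ : SGraph V₂ E₂) :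
    SGraph (V₁ ⊕ V₂) (E₁ ⊕ E₂) where
  ends := fun e => match e with
    | .inl e => (Sum.inl (Γ₁.ends e).1, Sum.inl (Γ₁.ends e).2)
    | .inr e => (Sum.inr (Γ₂.ends e).1, Sum.inr (Γ₂.ends e).2)
  sign := fun e => match e with
    | .inl e => Γ₁.sign e
    | .inr e => Γ₂.sign e

/-- The difference operator `δ : G^V → G^E`,
`(δg)(e) = ω(v,e)·g(v) + ω(u,e)·g(u)` for `e = uv`. -/
def deltaHom (Γ : SGraph V E) (ω : E → Bool → ℤˣ) (G : Type*) [AddCommGroup G] :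
    (V → G) →+ (E → G) :=
  AddMonoidHom.mk'
    (fun g e => (ω e true : ℤ) • g ((Γ.ends e).1) + (ω e false : ℤ) • g ((Γ.ends e).2))
    (by
      intro a b
      funext e
      simp only [Pi.add_apply, smul_add]
      abel)

end SGraph

end SignedGraphs

/-!
Package the tension sum `T(W)` and the sign `σ(W)` of a walk into its *gain*, the affine
permutation `x ↦ T(W) + σ(W) • x` of `G`. Gains multiply under concatenation, reversing a walk
inverts its gain (this is where compatibility of `ω` enters), a positive closed walk has trivial
gain iff `T(W) = 0`, and the gain of a negative walk is an involution.

By a simultaneous strong induction on length one shows that positive closed walks have trivial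
gain, and that for negative closed walks `B` at `x`, `D` at `y` and any walk `P` from `x` to
`y`, the gain of `P` conjugates that of `D` into that of `B` (i.e. `B P D P⁻¹` has trivial
gain). A closed walk that is not a cycle cancels a backtrack or splits off a shorter closed
subwalk; a walk `P` that is not a path, or vertices shared by `B`, `P`, `D`, let one reroute
through shorter walks of the right sign. What is left are the circuit walks: balanced cycles,
tight handcuffs `B D` and loose handcuffs `B P D P⁻¹`.

Modulo `2G` the signs disappear, so `T(W) ≡ Σ f(eᵢ)`; splitting a negative closed walk into a
shorter negative one and a positive one (whose tension sum vanishes) reduces the `2G` condition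
to unbalanced cycles.
-/

theorem Int.units_eq_neg_of_mul_eq_neg_one {a b : ℤˣ} (h : a * b = -1) : b = -a := by
  rcases Int.units_eq_one_or a with rfl | rfl <;> simpa [neg_eq_iff_eq_neg] using h

theorem units_smul_sub_self_mem_twoG {G : Type*} [AddCommGroup G] (u : ℤˣ) (g : G) :
    (u : ℤ) • g - g ∈ twoG G := by
  rcases Int.units_eq_one_or u with rfl | rfl
  · simp
  · exact ⟨-g, by simp [doubleHom, sub_eq_add_neg]⟩

namespace SGraph

variable {V E : Type*} {Γ : SGraph V E} {G : Type*} [AddCommGroup G]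
  {ω : E → Bool → ℤˣ} {f : E → G} {n : ℕ}

theorem IsCompatible.apply_not (hω : Γ.IsCompatible ω) (e : E) (d : Bool) :
    ω e (!d) = -(Γ.sign e * ω e d) := by
  rcases Int.units_eq_one_or (ω e true) with h1 | h1 <;>
    rcases Int.units_eq_one_or (ω e false) with h2 | h2 <;>
      cases d <;> simp [hω e, h1, h2]

theorem IsCompatible.apply_eq_of_sign_eq_neg_one (hω : Γ.IsCompatible ω) {e : E}
    (h : Γ.sign e = -1) (d d' : Bool) : ω e d = ω e d' := by
  have key := hω.apply_not e d
  rw [h] at key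
  cases d <;> cases d' <;> simp_all

namespace Walk

def length {u v : V} (W : Γ.Walk u v) : ℕ := W.edges.length

@[simp] theorem nil_append {u v : V} (q : Γ.Walk u v) : (nil u).append q = q := rfl

@[simp] theorem cons_append {e : E} {d : Bool} {w x : V} (p : Γ.Walk (Γ.endpt e !d) w)
    (q : Γ.Walk w x) : (cons e d p).append q = cons e d (p.append q) := rfl

@[simp] theorem edges_nil {u : V} : (nil (Γ := Γ) u).edges = [] := rfl

@[simp] theorem edges_cons {e : E} {d : Bool} {w : V} (p : Γ.Walk (Γ.endpt e !d) w) :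
    (cons e d p).edges = e :: p.edges := rfl

@[simp] theorem steps_nil {u : V} : (nil (Γ := Γ) u).steps = [] := rfl

@[simp] theorem steps_cons {e : E} {d : Bool} {w : V} (p : Γ.Walk (Γ.endpt e !d) w) :
    (cons e d p).steps = (e, d) :: p.steps := rfl

@[simp] theorem verts_nil {u : V} : (nil (Γ := Γ) u).verts = [u] := rfl

@[simp] theorem verts_cons {e : E} {d : Bool} {w : V} (p : Γ.Walk (Γ.endpt e !d) w) :
    (cons e d p).verts = Γ.endpt e d :: p.verts := rfl

@[simp] theorem sgn_nil {u : V} : (nil (Γ := Γ) u).sgn = 1 := rfl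

@[simp] theorem sgn_cons {e : E} {d : Bool} {w : V} (p : Γ.Walk (Γ.endpt e !d) w) :
    (cons e d p).sgn = Γ.sign e * p.sgn := rfl

@[simp] theorem tensionSum_nil {u : V} : (nil (Γ := Γ) u).tensionSum ω f = 0 := rfl

@[simp] theorem tensionSum_cons {e : E} {d : Bool} {w : V} (p : Γ.Walk (Γ.endpt e !d) w) :
    (cons e d p).tensionSum ω f = (ω e d : ℤ) • f e + (Γ.sign e : ℤ) • p.tensionSum ω f := rfl

@[simp] theorem edgeSum_nil {u : V} : (nil (Γ := Γ) u).edgeSum f = 0 := rfl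

@[simp] theorem edgeSum_cons {e : E} {d : Bool} {w : V} (p : Γ.Walk (Γ.endpt e !d) w) :
    (cons e d p).edgeSum f = f e + p.edgeSum f := by
  simp [edgeSum]

@[simp] theorem length_nil {u : V} : (nil (Γ := Γ) u).length = 0 := rfl

@[simp] theorem length_cons {e : E} {d : Bool} {w : V} (p : Γ.Walk (Γ.endpt e !d) w) :
    (cons e d p).length = p.length + 1 := by
  simp [length]

theorem exists_verts_eq_cons {u v : V} (p : Γ.Walk u v) : ∃ t, p.verts = u :: t := by
  cases p <;> simp

theorem start_mem_verts {u v : V} (p : Γ.Walk u v) : u ∈ p.verts := by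
  cases p <;> simp

@[simp] theorem srcs_nil {u : V} : (nil (Γ := Γ) u).srcs = [] := rfl

@[simp] theorem srcs_cons {e : E} {d : Bool} {w : V} (p : Γ.Walk (Γ.endpt e !d) w) :
    (cons e d p).srcs = Γ.endpt e d :: p.srcs := by
  obtain ⟨t, ht⟩ := exists_verts_eq_cons p
  simp [srcs, ht]

theorem verts_eq_srcs_append {u v : V} (p : Γ.Walk u v) : p.verts = p.srcs ++ [v] := by
  induction p with
  | nil => rfl
  | cons e d p ih => simp [ih]

theorem append_nil {u v : V} (p : Γ.Walk u v) : p.append (nil v) = p := by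
  induction p with
  | nil => rfl
  | cons e d p ih => rw [cons_append, ih]

@[simp] theorem edges_append {a b c : V} (p : Γ.Walk a b) (q : Γ.Walk b c) :
    (p.append q).edges = p.edges ++ q.edges := by
  induction p with
  | nil => rfl
  | cons e d p ih => simp [ih]

@[simp] theorem length_append {a b c : V} (p : Γ.Walk a b) (q : Γ.Walk b c) :
    (p.append q).length = p.length + q.length := by
  simp [length]

@[simp] theorem steps_append {a b c : V} (p : Γ.Walk a b) (q : Γ.Walk b c) :
    (p.append q).steps = p.steps ++ q.steps := by
  induction p with
  | nil => rfl
  | cons e d p ih => simp [ih]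

@[simp] theorem srcs_append {a b c : V} (p : Γ.Walk a b) (q : Γ.Walk b c) :
    (p.append q).srcs = p.srcs ++ q.srcs := by
  induction p with
  | nil => rfl
  | cons e d p ih => simp [ih]

theorem verts_append {a b c : V} (p : Γ.Walk a b) (q : Γ.Walk b c) :
    (p.append q).verts = p.srcs ++ q.verts := by
  induction p with
  | nil => rfl
  | cons e d p ih => simp [ih]

@[simp] theorem sgn_append {a b c : V} (p : Γ.Walk a b) (q : Γ.Walk b c) :
    (p.append q).sgn = p.sgn * q.sgn := by
  induction p with
  | nil => simp
  | cons e d p ih => simp [ih, mul_assoc]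

theorem tensionSum_append {a b c : V} (p : Γ.Walk a b) (q : Γ.Walk b c) :
    (p.append q).tensionSum ω f = p.tensionSum ω f + (p.sgn : ℤ) • q.tensionSum ω f := by
  induction p with
  | nil => simp
  | cons e d p ih => simp [ih, smul_add, mul_smul, add_assoc]

@[simp] theorem edgeSum_append {a b c : V} (p : Γ.Walk a b) (q : Γ.Walk b c) :
    (p.append q).edgeSum f = p.edgeSum f + q.edgeSum f := by
  simp [edgeSum]

theorem eq_of_length_eq_zero {a b : V} (p : Γ.Walk a b) (h : p.length = 0) : a = b := by
  cases p with
  | nil => rfl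
  | cons e d p => simp at h

theorem eq_nil_of_length_eq_zero {a : V} (p : Γ.Walk a a) (h : p.length = 0) : p = nil a := by
  cases p with
  | nil => rfl
  | cons e d p => simp at h

theorem start_mem_srcs {u v : V} (p : Γ.Walk u v) (h : 0 < p.length) : u ∈ p.srcs := by
  cases p with
  | nil => simp at h
  | cons e d p => simp

def revSingle (e : E) : ∀ d : Bool, Γ.Walk (Γ.endpt e !d) (Γ.endpt e d)
  | true => cons e false (nil _)
  | false => cons e true (nil _)

def reverse : ∀ {u v : V}, Γ.Walk u v → Γ.Walk v u
  | _, _, .nil x => .nil x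
  | _, _, .cons e d p => p.reverse.append (revSingle e d)

@[simp] theorem reverse_nil {u : V} : (nil (Γ := Γ) u).reverse = nil u := rfl

theorem reverse_cons {e : E} {d : Bool} {w : V} (p : Γ.Walk (Γ.endpt e !d) w) :
    (cons e d p).reverse = p.reverse.append (revSingle e d) := rfl

@[simp] theorem sgn_reverse {u v : V} (p : Γ.Walk u v) : p.reverse.sgn = p.sgn := by
  induction p with
  | nil => rfl
  | cons e d p ih => cases d <;> simp [reverse_cons, revSingle, ih, mul_comm]

@[simp] theorem length_reverse {u v : V} (p : Γ.Walk u v) : p.reverse.length = p.length := by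
  induction p with
  | nil => rfl
  | cons e d p ih => cases d <;> simp [reverse_cons, revSingle, ih]

theorem steps_reverse {u v : V} (p : Γ.Walk u v) :
    p.reverse.steps = p.steps.reverse.map fun s => (s.1, !s.2) := by
  induction p with
  | nil => rfl
  | cons e d p ih => cases d <;> simp [reverse_cons, revSingle, ih]

theorem isReverseOf_reverse {u v : V} (p : Γ.Walk u v) : p.reverse.IsReverseOf p :=
  steps_reverse p

theorem verts_reverse {u v : V} (p : Γ.Walk u v) : p.reverse.verts = p.verts.reverse := by
  induction p with
  | nil => rfl
  | cons e d p ih =>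
    rw [reverse_cons, verts_append, verts_cons, List.reverse_cons, ← ih,
      verts_eq_srcs_append p.reverse]
    cases d <;> simp [revSingle]

theorem sgn_eq_prod_steps {u v : V} (p : Γ.Walk u v) :
    p.sgn = (p.steps.map fun s => Γ.sign s.1).prod := by
  induction p with
  | nil => rfl
  | cons e d p ih => simp [ih]

theorem sgn_eq_of_isReverseOf {u v : V} {P : Γ.Walk u v} {Q : Γ.Walk v u}
    (h : Q.IsReverseOf P) : Q.sgn = P.sgn := by
  rw [sgn_eq_prod_steps, sgn_eq_prod_steps, h, List.map_map, List.map_reverse,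
    List.prod_reverse]
  rfl

def gain (ω : E → Bool → ℤˣ) (f : E → G) {u v : V} (W : Γ.Walk u v) : Equiv.Perm G :=
  Equiv.addLeft (W.tensionSum ω f) * MulAction.toPerm W.sgn

theorem gain_apply {u v : V} (W : Γ.Walk u v) (x : G) :
    W.gain ω f x = W.tensionSum ω f + (W.sgn : ℤ) • x := rfl

@[simp] theorem gain_nil {u : V} : (nil (Γ := Γ) u).gain ω f = 1 := by
  ext x; simp [gain_apply]

theorem gain_append {a b c : V} (p : Γ.Walk a b) (q : Γ.Walk b c) :
    (p.append q).gain ω f = p.gain ω f * q.gain ω f := by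
  ext x
  simp [gain_apply, tensionSum_append, smul_add, mul_smul, add_assoc]

theorem gain_cons {e : E} {d : Bool} {w : V} (p : Γ.Walk (Γ.endpt e !d) w) :
    (cons e d p).gain ω f = (cons (Γ := Γ) e d (nil _)).gain ω f * p.gain ω f :=
  gain_append (cons e d (nil _)) p

theorem gain_eq_one_iff {v : V} {W : Γ.Walk v v} (h : W.sgn = 1) :
    W.gain ω f = 1 ↔ W.tensionSum ω f = 0 := by
  refine ⟨fun h1 => by simpa [gain_apply] using congrArg (· 0) h1, fun h0 => ?_⟩
  ext x; simp [gain_apply, h, h0]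

theorem gain_mul_self {u v : V} {W : Γ.Walk u v} (h : W.sgn = -1) :
    W.gain ω f * W.gain ω f = 1 := by
  ext x; simp [gain_apply, h]

theorem gain_inv {u v : V} {W : Γ.Walk u v} (h : W.sgn = -1) :
    (W.gain ω f)⁻¹ = W.gain ω f :=
  inv_eq_of_mul_eq_one_right (gain_mul_self h)

theorem gain_backtrack (hω : Γ.IsCompatible ω) (e : E) (d : Bool) {w : V}
    (p : Γ.Walk (Γ.endpt e !(!d)) w) :
    (cons e d (cons e (!d) p)).gain ω f = p.gain ω f := by
  ext x
  rcases Int.units_eq_one_or (Γ.sign e) with h1 | h1 <;>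
    rcases Int.units_eq_one_or (ω e d) with h2 | h2 <;>
      simp [gain_apply, hω.apply_not e d, h1, h2, smul_add]

theorem gain_reverse (hω : Γ.IsCompatible ω) {u v : V} (p : Γ.Walk u v) :
    p.reverse.gain ω f = (p.gain ω f)⁻¹ := by
  induction p with
  | nil => simp
  | cons e d p ih =>
    have hsingle :
        (cons (Γ := Γ) e d (nil _)).gain ω f * (revSingle (Γ := Γ) e d).gain ω f = 1 := by
      rw [← gain_append]
      cases d <;> exact (gain_backtrack (f := f) hω e _ (nil _)).trans gain_nil
    rw [reverse_cons, gain_append, ih, eq_inv_of_mul_eq_one_right hsingle, ← mul_inv_rev,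
      ← gain_append]
    rfl

theorem exists_eq_append_of_mem_srcs {u v x : V} (W : Γ.Walk u v) (hx : x ∈ W.srcs) :
    ∃ (A : Γ.Walk u x) (B : Γ.Walk x v), W = A.append B ∧ 0 < B.length := by
  induction W with
  | nil => simp at hx
  | cons e d p ih =>
    by_cases h : x = Γ.endpt e d
    · subst h
      exact ⟨nil _, cons e d p, rfl, by simp⟩
    · obtain ⟨A, B, rfl, hB⟩ := ih (by simpa [h] using hx)
      exact ⟨cons e d A, B, rfl, hB⟩

theorem exists_eq_append_of_mem_verts {u v x : V} (W : Γ.Walk u v) (hx : x ∈ W.verts) :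
    ∃ (A : Γ.Walk u x) (B : Γ.Walk x v), W = A.append B := by
  rw [verts_eq_srcs_append, List.mem_append, List.mem_singleton] at hx
  rcases hx with hx | rfl
  · obtain ⟨A, B, hW, -⟩ := exists_eq_append_of_mem_srcs W hx
    exact ⟨A, B, hW⟩
  · exact ⟨W, nil x, (append_nil W).symm⟩

theorem exists_eq_append_cons_of_mem_edges {u v : V} (W : Γ.Walk u v) {e : E}
    (he : e ∈ W.edges) :
    ∃ (d : Bool) (A : Γ.Walk u (Γ.endpt e d)) (B : Γ.Walk (Γ.endpt e !d) v),
      W = A.append (cons e d B) := by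
  induction W with
  | nil => simp at he
  | cons e' d' p ih =>
    by_cases h : e = e'
    · subst h
      exact ⟨d', nil _, p, rfl⟩
    · obtain ⟨d, A, B, rfl⟩ := ih (by simpa [h] using he)
      exact ⟨d, cons e' d' A, B, rfl⟩

theorem exists_eq_append_append_of_not_nodup_srcs {u v : V} (W : Γ.Walk u v)
    (h : ¬ W.srcs.Nodup) :
    ∃ (z : V) (A : Γ.Walk u z) (L : Γ.Walk z z) (C : Γ.Walk z v),
      W = A.append (L.append C) ∧ 0 < L.length ∧ 0 < C.length := by
  induction W with
  | nil => simp at h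
  | cons e d p ih =>
    by_cases hx : Γ.endpt e d ∈ p.srcs
    · obtain ⟨A, B, rfl, hB⟩ := exists_eq_append_of_mem_srcs p hx
      exact ⟨_, nil _, cons e d A, B, rfl, by simp, hB⟩
    · obtain ⟨z, A, L, C, rfl, hL, hC⟩ := ih (by simpa [hx] using h)
      exact ⟨z, cons e d A, L, C, rfl, hL, hC⟩

/-- A walk with distinct sources that repeats an edge immediately backtracks along it. -/
theorem exists_gain_eq_of_not_nodup_edges (hω : Γ.IsCompatible ω) {u v : V} (W : Γ.Walk u v)
    (hs : W.srcs.Nodup) (he : ¬ W.edges.Nodup) :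
    ∃ W' : Γ.Walk u v, W'.length + 2 = W.length ∧ W'.sgn = W.sgn ∧
      W'.gain ω f = W.gain ω f := by
  induction W with
  | nil => simp at he
  | cons e d p ih =>
    rw [srcs_cons, List.nodup_cons] at hs
    by_cases hp : p.edges.Nodup
    · obtain ⟨d', A, B, rfl⟩ :=
        exists_eq_append_cons_of_mem_edges p (by simpa [hp] using he)
      have hd : d' = !d := by
        cases d <;> cases d' <;> simp_all
      subst hd
      obtain rfl : A = nil _ := by
        refine eq_nil_of_length_eq_zero A (Nat.eq_zero_of_not_pos fun hA => ?_)
        rw [srcs_append, srcs_cons] at hs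
        have := (List.nodup_append.mp hs.2).2.2 _ (start_mem_srcs A hA)
        simp at this
      cases d <;>
        exact ⟨B, by simp, by simp [← mul_assoc, Int.units_mul_self],
          (gain_backtrack hω _ _ B).symm⟩
    · obtain ⟨W', hlen, hsgn, hgain⟩ := ih hs.2 hp
      exact ⟨cons e d W', by simp [← hlen], by simp [hsgn],
        by rw [gain_cons W', gain_cons p, hgain]⟩

theorem sgn_of_length_eq_zero {a b : V} (p : Γ.Walk a b) (h : p.length = 0) : p.sgn = 1 := by
  cases p with
  | nil => rfl
  | cons e d p => simp at h

theorem gain_of_length_eq_zero {a b : V} (p : Γ.Walk a b) (h : p.length = 0) :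
    p.gain ω f = 1 := by
  cases p with
  | nil => simp
  | cons e d p => simp at h

theorem endpt_mem_verts {u v : V} (W : Γ.Walk u v) {e : E} (he : e ∈ W.edges) (b : Bool) :
    Γ.endpt e b ∈ W.verts := by
  obtain ⟨d, A, B, rfl⟩ := exists_eq_append_cons_of_mem_edges W he
  have := start_mem_verts B
  cases b <;> cases d <;> simp_all [verts_append]

theorem mem_srcs_of_mem_verts {v x : V} (W : Γ.Walk v v) (hW : 0 < W.length)
    (hx : x ∈ W.verts) : x ∈ W.srcs := by
  rw [verts_eq_srcs_append, List.mem_append, List.mem_singleton] at hx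
  rcases hx with hx | rfl
  · exact hx
  · exact start_mem_srcs W hW

theorem endpt_ne_of_nodup_verts {u v : V} (P : Γ.Walk u v) (hP : P.verts.Nodup) {e : E}
    (he : e ∈ P.edges) : Γ.endpt e true ≠ Γ.endpt e false := by
  intro hloop
  obtain ⟨d, A, B, rfl⟩ := exists_eq_append_cons_of_mem_edges P he
  rw [verts_append, verts_cons, List.nodup_append] at hP
  have := hP.2.1
  obtain ⟨t, ht⟩ := exists_verts_eq_cons B
  cases d <;> simp_all

/-- A common edge would be a loop at `x`. -/
theorem not_mem_edges_of_nodup_verts {u v x : V} (P : Γ.Walk u v) (hP : P.verts.Nodup)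
    (C : Γ.Walk x x) (hC : 0 < C.length) (hPC : ∀ z ∈ P.verts, z ∈ C.srcs → z = x)
    {e : E} (he : e ∈ P.edges) : e ∉ C.edges := fun heC =>
  endpt_ne_of_nodup_verts P hP he <|
    (hPC _ (endpt_mem_verts P he true) (mem_srcs_of_mem_verts C hC (endpt_mem_verts C heC _))).trans
    (hPC _ (endpt_mem_verts P he false)
      (mem_srcs_of_mem_verts C hC (endpt_mem_verts C heC _))).symm

theorem exists_gain_eq_of_loop_mem_edges {x : V} (B : Γ.Walk x x) (hB : B.srcs.Nodup) {e : E}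
    (he : e ∈ B.edges) (hloop : ∀ b, Γ.endpt e b = x) :
    ∃ d, B.gain ω f = (cons (Γ := Γ) e d (nil _)).gain ω f ∧ B.sgn = Γ.sign e := by
  obtain ⟨d, A, C, rfl⟩ := exists_eq_append_cons_of_mem_edges B he
  rw [srcs_append, srcs_cons, List.nodup_append, List.nodup_cons] at hB
  have hA : A.length = 0 := Nat.eq_zero_of_not_pos fun hA =>
    hB.2.2 _ (start_mem_srcs A hA) _ List.mem_cons_self (by rw [hloop d])
  have hC : C.length = 0 := Nat.eq_zero_of_not_pos fun hC =>
    hB.2.1.1 (by simpa [hloop] using start_mem_srcs C hC)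
  refine ⟨d, ?_, ?_⟩
  · rw [gain_append, gain_cons, gain_of_length_eq_zero A hA, gain_of_length_eq_zero C hC,
      one_mul, mul_one]
  · simp [sgn_of_length_eq_zero A hA, sgn_of_length_eq_zero C hC]

theorem length_pos_of_sgn_eq_neg_one {a b : V} {p : Γ.Walk a b} (h : p.sgn = -1) :
    0 < p.length :=
  Nat.pos_of_ne_zero fun h0 => by simp [sgn_of_length_eq_zero p h0] at h

theorem exists_eq_append_append_of_not_nodup_verts {u v : V} (P : Γ.Walk u v)
    (h : ¬ P.verts.Nodup) :
    ∃ (z : V) (A : Γ.Walk u z) (L : Γ.Walk z z) (C : Γ.Walk z v),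
      P = A.append (L.append C) ∧ 0 < L.length := by
  by_cases hs : P.srcs.Nodup
  · have hv : v ∈ P.srcs := by
      by_contra hv
      refine h ?_
      rw [verts_eq_srcs_append]
      refine List.nodup_append.2 ⟨hs, List.nodup_singleton v, fun a ha b hb hab => hv ?_⟩
      have hav : a = v := hab.trans (List.mem_singleton.1 hb)
      exact hav ▸ ha
    obtain ⟨A, L, rfl, hL⟩ := exists_eq_append_of_mem_srcs P hv
    exact ⟨v, A, L, nil v, by rw [append_nil], hL⟩
  · obtain ⟨z, A, L, C, hP, hL, -⟩ := exists_eq_append_append_of_not_nodup_srcs P hs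
    exact ⟨z, A, L, C, hP, hL⟩

theorem exists_gain_eq_or_eq_append_append (hω : Γ.IsCompatible ω) {u v : V}
    (W : Γ.Walk u v) (h : ¬ (W.srcs.Nodup ∧ W.edges.Nodup)) :
    (∃ W' : Γ.Walk u v, W'.length + 2 = W.length ∧ W'.sgn = W.sgn ∧
      W'.gain ω f = W.gain ω f) ∨
    ∃ (z : V) (A : Γ.Walk u z) (L : Γ.Walk z z) (C : Γ.Walk z v),
      W = A.append (L.append C) ∧ 0 < L.length ∧ 0 < C.length := by
  by_cases hs : W.srcs.Nodup
  · exact Or.inl (exists_gain_eq_of_not_nodup_edges hω W hs fun he => h ⟨hs, he⟩)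
  · exact Or.inr (exists_eq_append_append_of_not_nodup_srcs W hs)

theorem semiconjBy_gain_rotate {x z : V} (B₁ : Γ.Walk x z) (B₂ : Γ.Walk z x) :
    SemiconjBy (B₁.gain ω f) ((B₂.append B₁).gain ω f) ((B₁.append B₂).gain ω f) := by
  simp only [gain_append, SemiconjBy, mul_assoc]

theorem semiconjBy_gain_reverse_rotate (hω : Γ.IsCompatible ω) {x z : V} (B₁ : Γ.Walk x z)
    (B₂ : Γ.Walk z x) :
    SemiconjBy (B₂.reverse.gain ω f) ((B₂.append B₁).gain ω f) ((B₁.append B₂).gain ω f) := by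
  simp only [gain_append, gain_reverse hω, SemiconjBy, mul_assoc, inv_mul_cancel_left,
    mul_inv_cancel, mul_one]

theorem semiconjBy_gain_reverse_iff (hω : Γ.IsCompatible ω) {x y : V} (B : Γ.Walk x x)
    (P : Γ.Walk x y) (D : Γ.Walk y y) :
    SemiconjBy (P.reverse.gain ω f) (B.gain ω f) (D.gain ω f) ↔
      SemiconjBy (P.gain ω f) (D.gain ω f) (B.gain ω f) := by
  rw [gain_reverse hω, SemiconjBy.inv_symm_left_iff]

theorem tensionSum_sub_edgeSum_mem_twoG {u v : V} (W : Γ.Walk u v) :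
    W.tensionSum ω f - W.edgeSum f ∈ twoG G := by
  induction W with
  | nil => simp
  | cons e d p ih =>
    have key := (twoG G).add_mem (units_smul_sub_self_mem_twoG (ω e d) (f e))
      ((twoG G).add_mem (units_smul_sub_self_mem_twoG (Γ.sign e) (p.tensionSum ω f)) ih)
    convert key using 1
    simp only [tensionSum_cons, edgeSum_cons]
    abel

theorem edgeSum_mem_twoG_iff {u v : V} (W : Γ.Walk u v) :
    W.edgeSum f ∈ twoG G ↔ W.tensionSum ω f ∈ twoG G := by
  have h := W.tensionSum_sub_edgeSum_mem_twoG (ω := ω) (f := f)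
  constructor <;> intro hW
  · simpa using (twoG G).add_mem h hW
  · simpa using (twoG G).sub_mem hW h

end Walk

open Walk

theorem isCircuitWalk_of_isBasicCircuitWalk {v : V} {W : Γ.Walk v v}
    (h : Γ.IsBasicCircuitWalk W) : Γ.IsCircuitWalk W :=
  ⟨v, W, .nil v, rfl, by rwa [append_nil]⟩

theorem sgn_of_isCircuitWalk {v : V} {W : Γ.Walk v v} (h : Γ.IsCircuitWalk W) : W.sgn = 1 := by
  obtain ⟨u, A, B, rfl, hb⟩ := h
  rw [sgn_append, mul_comm, ← sgn_append]
  rcases hb with h | ⟨C₁, C₂, ⟨⟨-, h₁⟩, ⟨-, h₂⟩, -⟩, hW⟩ |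
    ⟨w, C₁, P, C₂, Q, ⟨⟨-, h₁⟩, ⟨-, h₂⟩, -⟩, hQ, hW⟩
  · exact h.2
  · simp [hW, h₁, h₂]
  · simp [hW, h₁, h₂, sgn_eq_of_isReverseOf hQ, Int.units_mul_self]

theorem IsTension.gain_eq_one (hT : Γ.IsTension ω f) {v : V} {W : Γ.Walk v v}
    (h : Γ.IsCircuitWalk W) : W.gain ω f = 1 :=
  (gain_eq_one_iff (sgn_of_isCircuitWalk h)).2 (hT v W h)

theorem IsTension.gain_eq_of_isUnbalancedCycle (hT : Γ.IsTension ω f) (hω : Γ.IsCompatible ω)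
    {x : V} {B D : Γ.Walk x x} (hB : Γ.IsUnbalancedCycle B) (hD : Γ.IsUnbalancedCycle D)
    (hBD : ∀ z ∈ B.srcs, z ∈ D.srcs → z = x) : B.gain ω f = D.gain ω f := by
  by_cases he : ∃ e ∈ B.edges, e ∈ D.edges
  · -- a common edge of two cycles meeting only at `x` is a loop at `x`, and it is all of both
    obtain ⟨e, heB, heD⟩ := he
    have hloop : ∀ b, Γ.endpt e b = x := fun b =>
      hBD _ (mem_srcs_of_mem_verts B (List.length_pos_iff.2 hB.1.1) (endpt_mem_verts B heB b))
        (mem_srcs_of_mem_verts D (List.length_pos_iff.2 hD.1.1) (endpt_mem_verts D heD b))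
    obtain ⟨d₁, hgB, hsB⟩ := exists_gain_eq_of_loop_mem_edges (f := f) B hB.1.2.1 heB hloop
    obtain ⟨d₂, hgD, -⟩ := exists_gain_eq_of_loop_mem_edges (f := f) D hD.1.2.1 heD hloop
    have hσ : Γ.sign e = -1 := hsB ▸ hB.2
    rw [hgB, hgD]
    ext y
    simp [gain_apply, hω.apply_eq_of_sign_eq_neg_one hσ d₁ d₂]
  · push Not at he
    have h := hT.gain_eq_one <| isCircuitWalk_of_isBasicCircuitWalk <|
      Or.inr (Or.inl ⟨B, D, ⟨hB, hD, hBD, he⟩, rfl⟩)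
    rwa [gain_append, mul_eq_one_iff_eq_inv, gain_inv hD.2] at h

theorem IsTension.semiconjBy_of_isLooseHandcuff (hT : Γ.IsTension ω f) (hω : Γ.IsCompatible ω)
    {x y : V} {B : Γ.Walk x x} {P : Γ.Walk x y} {D : Γ.Walk y y}
    (h : Γ.IsLooseHandcuff B P D) : SemiconjBy (P.gain ω f) (D.gain ω f) (B.gain ω f) := by
  have h1 := hT.gain_eq_one <| isCircuitWalk_of_isBasicCircuitWalk <|
    Or.inr (Or.inr ⟨y, B, P, D, P.reverse, h, isReverseOf_reverse P, rfl⟩)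
  rw [gain_append, gain_append, gain_append, gain_reverse hω, ← mul_assoc, ← mul_assoc,
    mul_inv_eq_one] at h1
  calc P.gain ω f * D.gain ω f = P.gain ω f * (D.gain ω f)⁻¹ := by rw [gain_inv h.2.1.2]
    _ = B.gain ω f * P.gain ω f := (eq_mul_inv_of_mul_eq h1).symm

def PositiveGainsTrivial (Γ : SGraph V E) (ω : E → Bool → ℤˣ) (f : E → G) (n : ℕ) : Prop :=
  ∀ ⦃v : V⦄ (W : Γ.Walk v v), W.length < n → W.sgn = 1 → W.gain ω f = 1

def NegativeGainsConjugate (Γ : SGraph V E) (ω : E → Bool → ℤˣ) (f : E → G) (n : ℕ) : Prop :=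
  ∀ ⦃x y : V⦄ (B : Γ.Walk x x) (P : Γ.Walk x y) (D : Γ.Walk y y),
    B.length + P.length + D.length < n → B.sgn = -1 → D.sgn = -1 →
      SemiconjBy (P.gain ω f) (D.gain ω f) (B.gain ω f)

theorem PositiveGainsTrivial.gain_eq (hpos : Γ.PositiveGainsTrivial ω f n)
    (hω : Γ.IsCompatible ω) {x z : V} {p q : Γ.Walk x z} (hs : p.sgn = q.sgn)
    (hl : p.length + q.length < n) : p.gain ω f = q.gain ω f := by
  have h := hpos (p.append q.reverse) (by simpa using hl) (by simp [hs, Int.units_mul_self])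
  rwa [gain_append, gain_reverse hω, mul_inv_eq_one] at h

theorem PositiveGainsTrivial.gain_eq_or_gain_eq (hpos : Γ.PositiveGainsTrivial ω f n)
    (hω : Γ.IsCompatible ω) {x z : V} {p q₁ q₂ : Γ.Walk x z} (hs : q₂.sgn = -q₁.sgn)
    (h₁ : p.length + q₁.length < n) (h₂ : p.length + q₂.length < n) :
    p.gain ω f = q₁.gain ω f ∨ p.gain ω f = q₂.gain ω f := by
  by_cases h : p.sgn = q₁.sgn
  · exact Or.inl (hpos.gain_eq hω h h₁)
  · exact Or.inr (hpos.gain_eq hω ((Int.units_ne_iff_eq_neg.1 h).trans hs.symm) h₂)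

theorem PositiveGainsTrivial.gain_eq_of_mem_srcs (hpos : Γ.PositiveGainsTrivial ω f n)
    (hω : Γ.IsCompatible ω) {x z : V} {B D : Γ.Walk x x} (hμ : B.length + D.length ≤ n)
    (hB : B.sgn = -1) (hD : D.sgn = -1) (hzB : z ∈ B.srcs) (hzD : z ∈ D.srcs) (hzx : z ≠ x) :
    B.gain ω f = D.gain ω f := by
  obtain ⟨B₁, B₂, rfl, hB₂⟩ := exists_eq_append_of_mem_srcs B hzB
  obtain ⟨D₁, D₂, rfl, hD₂⟩ := exists_eq_append_of_mem_srcs D hzD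
  have hB₁ : 0 < B₁.length :=
    Nat.pos_of_ne_zero fun h => hzx (eq_of_length_eq_zero B₁ h).symm
  simp only [length_append, sgn_append] at hμ hB hD
  have hB₂s := Int.units_eq_neg_of_mul_eq_neg_one hB
  have hD₂s := Int.units_eq_neg_of_mul_eq_neg_one hD
  rw [gain_append, gain_append]
  by_cases hs : B₁.sgn = D₁.sgn
  · rw [hpos.gain_eq hω hs (by omega),
      hpos.gain_eq hω (p := B₂) (q := D₂) (by rw [hB₂s, hD₂s, hs]) (by omega)]
  · have hs' := Int.units_ne_iff_eq_neg.1 hs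
    rw [hpos.gain_eq hω (p := B₁) (q := D₂.reverse) (by rw [sgn_reverse, hD₂s, hs'])
        (by simp; omega),
      hpos.gain_eq hω (p := B₂) (q := D₁.reverse) (by rw [sgn_reverse, hB₂s, hs', neg_neg])
        (by simp; omega),
      gain_reverse hω, gain_reverse hω, ← mul_inv_rev, ← gain_append, gain_inv]
    simpa using hD

theorem NegativeGainsConjugate.semiconjBy_of_not_nodup_left
    (hneg : Γ.NegativeGainsConjugate ω f n) (hpos : Γ.PositiveGainsTrivial ω f n)
    (hω : Γ.IsCompatible ω) {x y : V} {B : Γ.Walk x x} {P : Γ.Walk x y} {D : Γ.Walk y y}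
    (hμ : B.length + P.length + D.length ≤ n) (hB : B.sgn = -1) (hD : D.sgn = -1)
    (hcyc : ¬ (B.srcs.Nodup ∧ B.edges.Nodup)) :
    SemiconjBy (P.gain ω f) (D.gain ω f) (B.gain ω f) := by
  rcases exists_gain_eq_or_eq_append_append (f := f) hω B hcyc with
    ⟨B', hlen, hsgn, hgain⟩ | ⟨z, A, L, C, rfl, hL, hC⟩
  · rw [← hgain]
    exact hneg B' P D (by omega) (hsgn.trans hB) hD
  simp only [length_append, sgn_append] at hμ hB
  rcases Int.units_eq_one_or L.sgn with hLs | hLs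
  · have hAC := hneg (A.append C) P D (by simp; omega) (by simpa [hLs] using hB) hD
    rwa [gain_append, gain_append, hpos L (by omega) hLs, one_mul, ← gain_append]
  · have hCA := hpos (C.append A) (by simp; omega) (by simpa [hLs, mul_comm] using hB)
    have hAL : SemiconjBy (A.gain ω f) (L.gain ω f) ((A.append (L.append C)).gain ω f) := by
      rw [gain_append] at hCA
      rw [SemiconjBy, gain_append, gain_append, mul_assoc, mul_assoc, hCA, mul_one]
    have hLD := hneg L (A.reverse.append P) D (by simp; omega) hLs hD
    rw [gain_append, gain_reverse hω] at hLD
    simpa using hAL.mul_left hLD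

theorem NegativeGainsConjugate.semiconjBy_of_not_nodup_verts
    (hneg : Γ.NegativeGainsConjugate ω f n) (hpos : Γ.PositiveGainsTrivial ω f n) {x y : V}
    {B : Γ.Walk x x} {P : Γ.Walk x y} {D : Γ.Walk y y}
    (hμ : B.length + P.length + D.length ≤ n) (hB : B.sgn = -1) (hD : D.sgn = -1)
    (hP : ¬ P.verts.Nodup) :
    SemiconjBy (P.gain ω f) (D.gain ω f) (B.gain ω f) := by
  obtain ⟨z, A, L, C, rfl, hL⟩ := exists_eq_append_append_of_not_nodup_verts P hP
  have hBl := length_pos_of_sgn_eq_neg_one hB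
  simp only [length_append] at hμ
  have hAC := hneg B (A.append C) D (by simp; omega) hB hD
  rw [gain_append, gain_append]
  rcases Int.units_eq_one_or L.sgn with hLs | hLs
  · rwa [hpos L (by omega) hLs, one_mul, ← gain_append]
  · have hLD := hneg L C D (by omega) hLs hD
    rw [← hLD.eq, ← mul_assoc, ← gain_append]
    exact hAC.mul_left (Commute.refl _)

theorem NegativeGainsConjugate.semiconjBy_of_mem_verts_of_mem_srcs
    (hneg : Γ.NegativeGainsConjugate ω f n) (hpos : Γ.PositiveGainsTrivial ω f n)
    (hω : Γ.IsCompatible ω) {x y z : V} {B : Γ.Walk x x} {P : Γ.Walk x y} {D : Γ.Walk y y}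
    (hμ : B.length + P.length + D.length ≤ n) (hB : B.sgn = -1) (hD : D.sgn = -1)
    (hzP : z ∈ P.verts) (hzB : z ∈ B.srcs) (hzx : z ≠ x) :
    SemiconjBy (P.gain ω f) (D.gain ω f) (B.gain ω f) := by
  obtain ⟨P₁, P₂, rfl⟩ := exists_eq_append_of_mem_verts P hzP
  obtain ⟨B₁, B₂, rfl, hB₂⟩ := exists_eq_append_of_mem_srcs B hzB
  have hP₁ : 0 < P₁.length :=
    Nat.pos_of_ne_zero fun h => hzx (eq_of_length_eq_zero P₁ h).symm
  have hDl := length_pos_of_sgn_eq_neg_one hD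
  simp only [length_append, sgn_append] at hμ hB
  have hrot := hneg (B₂.append B₁) P₂ D (by simp; omega) (by simpa [mul_comm] using hB) hD
  rw [gain_append]
  rcases hpos.gain_eq_or_gain_eq hω (p := P₁) (q₁ := B₁) (q₂ := B₂.reverse)
      (Int.units_eq_neg_of_mul_eq_neg_one (by simpa using hB)) (by omega) (by simp; omega)
      with h | h
  · rw [h]
    exact (semiconjBy_gain_rotate B₁ B₂).mul_left hrot
  · rw [h]
    exact (semiconjBy_gain_reverse_rotate hω B₁ B₂).mul_left hrot

theorem NegativeGainsConjugate.semiconjBy_of_mem_srcs_of_mem_srcs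
    (hneg : Γ.NegativeGainsConjugate ω f n) (hpos : Γ.PositiveGainsTrivial ω f n)
    (hω : Γ.IsCompatible ω) {x y z : V} {B : Γ.Walk x x} {P : Γ.Walk x y} {D : Γ.Walk y y}
    (hμ : B.length + P.length + D.length ≤ n) (hB : B.sgn = -1) (hD : D.sgn = -1)
    (hP : 0 < P.length) (hzB : z ∈ B.srcs) (hzD : z ∈ D.srcs) :
    SemiconjBy (P.gain ω f) (D.gain ω f) (B.gain ω f) := by
  obtain ⟨B₁, B₂, rfl, hB₂⟩ := exists_eq_append_of_mem_srcs B hzB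
  obtain ⟨D₁, D₂, rfl, hD₂⟩ := exists_eq_append_of_mem_srcs D hzD
  simp only [length_append, sgn_append] at hμ hB hD
  have hrot : SemiconjBy ((nil z).gain ω f) ((D₂.append D₁).gain ω f)
      ((B₂.append B₁).gain ω f) :=
    hneg _ (nil z) _ (by simp; omega) (by simpa [mul_comm] using hB)
      (by simpa [mul_comm] using hD)
  have hD₁ := (hrot.mul_left (semiconjBy_gain_reverse_rotate hω D₂ D₁))
  rcases hpos.gain_eq_or_gain_eq hω (p := P) (q₁ := B₁.append D₁.reverse)
      (q₂ := B₂.reverse.append D₁.reverse)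
      (by simp [Int.units_eq_neg_of_mul_eq_neg_one hB]) (by simp; omega) (by simp; omega)
      with h | h
  · rw [h, gain_append]
    simpa using (semiconjBy_gain_rotate B₁ B₂).mul_left hD₁
  · rw [h, gain_append]
    simpa using (semiconjBy_gain_reverse_rotate hω B₁ B₂).mul_left hD₁

theorem NegativeGainsConjugate.semiconjBy_of_isUnbalancedCycle
    (hneg : Γ.NegativeGainsConjugate ω f n) (hpos : Γ.PositiveGainsTrivial ω f n)
    (hT : Γ.IsTension ω f) (hω : Γ.IsCompatible ω) {x y : V}
    {B : Γ.Walk x x} {P : Γ.Walk x y} {D : Γ.Walk y y}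
    (hμ : B.length + P.length + D.length ≤ n) (hB : Γ.IsUnbalancedCycle B)
    (hD : Γ.IsUnbalancedCycle D) (hP : P.verts.Nodup)
    (hPB : ∀ z ∈ P.verts, z ∈ B.srcs → z = x) (hPD : ∀ z ∈ P.verts, z ∈ D.srcs → z = y) :
    SemiconjBy (P.gain ω f) (D.gain ω f) (B.gain ω f) := by
  rcases Nat.eq_zero_or_pos P.length with hP0 | hP0
  · obtain rfl := eq_of_length_eq_zero P hP0
    obtain rfl := eq_nil_of_length_eq_zero P hP0
    suffices B.gain ω f = D.gain ω f by simp [this, SemiconjBy]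
    by_cases hBD : ∃ z ∈ B.srcs, z ∈ D.srcs ∧ z ≠ x
    · obtain ⟨z, hzB, hzD, hzx⟩ := hBD
      exact hpos.gain_eq_of_mem_srcs hω (by simpa using hμ) hB.2 hD.2 hzB hzD hzx
    · push Not at hBD
      exact hT.gain_eq_of_isUnbalancedCycle hω hB hD hBD
  by_cases hBD : ∃ z ∈ B.srcs, z ∈ D.srcs
  · obtain ⟨z, hzB, hzD⟩ := hBD
    exact hneg.semiconjBy_of_mem_srcs_of_mem_srcs hpos hω hμ hB.2 hD.2 hP0 hzB hzD
  push Not at hBD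
  have hBl := List.length_pos_iff.2 hB.1.1
  have hDl := List.length_pos_iff.2 hD.1.1
  refine hT.semiconjBy_of_isLooseHandcuff hω
    ⟨hB, hD, ⟨List.ne_nil_of_length_pos hP0, hP⟩, hBD, hPB, hPD, fun e he => ?_⟩
  exact ⟨not_mem_edges_of_nodup_verts P hP B hBl hPB he,
    not_mem_edges_of_nodup_verts P hP D hDl hPD he⟩

theorem NegativeGainsConjugate.succ (hT : Γ.IsTension ω f) (hω : Γ.IsCompatible ω)
    (hpos : Γ.PositiveGainsTrivial ω f n) (hneg : Γ.NegativeGainsConjugate ω f n) :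
    Γ.NegativeGainsConjugate ω f (n + 1) := by
  intro x y B P D hμ hB hD
  replace hμ : B.length + P.length + D.length ≤ n := by omega
  have hμ' : D.length + P.reverse.length + B.length ≤ n := by simp; omega
  by_cases hBc : B.srcs.Nodup ∧ B.edges.Nodup
  swap
  · exact hneg.semiconjBy_of_not_nodup_left hpos hω hμ hB hD hBc
  by_cases hDc : D.srcs.Nodup ∧ D.edges.Nodup
  swap
  · exact (semiconjBy_gain_reverse_iff hω B P D).1 <|
      hneg.semiconjBy_of_not_nodup_left hpos hω hμ' hD hB hDc
  by_cases hPv : P.verts.Nodup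
  swap
  · exact hneg.semiconjBy_of_not_nodup_verts hpos hμ hB hD hPv
  by_cases hPB : ∃ z ∈ P.verts, z ∈ B.srcs ∧ z ≠ x
  · obtain ⟨z, hzP, hzB, hzx⟩ := hPB
    exact hneg.semiconjBy_of_mem_verts_of_mem_srcs hpos hω hμ hB hD hzP hzB hzx
  by_cases hPD : ∃ z ∈ P.verts, z ∈ D.srcs ∧ z ≠ y
  · obtain ⟨z, hzP, hzD, hzy⟩ := hPD
    exact (semiconjBy_gain_reverse_iff hω B P D).1 <|
      hneg.semiconjBy_of_mem_verts_of_mem_srcs hpos hω hμ' hD hB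
        (by simpa [verts_reverse] using hzP) hzD hzy
  push Not at hPB hPD
  exact hneg.semiconjBy_of_isUnbalancedCycle hpos hT hω hμ
    ⟨⟨List.ne_nil_of_length_pos (length_pos_of_sgn_eq_neg_one hB), hBc⟩, hB⟩
    ⟨⟨List.ne_nil_of_length_pos (length_pos_of_sgn_eq_neg_one hD), hDc⟩, hD⟩ hPv hPB hPD

theorem PositiveGainsTrivial.succ (hT : Γ.IsTension ω f) (hω : Γ.IsCompatible ω)
    (hpos : Γ.PositiveGainsTrivial ω f n) (hneg : Γ.NegativeGainsConjugate ω f (n + 1)) :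
    Γ.PositiveGainsTrivial ω f (n + 1) := by
  intro v W hW hs
  by_cases hc : W.srcs.Nodup ∧ W.edges.Nodup
  · rcases Nat.eq_zero_or_pos W.length with h0 | h0
    · exact gain_of_length_eq_zero W h0
    · exact hT.gain_eq_one <| isCircuitWalk_of_isBasicCircuitWalk <|
        Or.inl ⟨⟨List.ne_nil_of_length_pos h0, hc⟩, hs⟩
  rcases exists_gain_eq_or_eq_append_append (f := f) hω W hc with
    ⟨W', hlen, hsgn, hgain⟩ | ⟨z, A, L, C, rfl, hL, hC⟩
  · rw [← hgain]
    exact hpos W' (by omega) (hsgn.trans hs)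
  simp only [length_append, sgn_append] at hW hs
  rw [gain_append, gain_append]
  rcases Int.units_eq_one_or L.sgn with hLs | hLs
  · rw [hpos L (by omega) hLs, one_mul, ← gain_append]
    exact hpos (A.append C) (by simp; omega) (by simpa [hLs] using hs)
  · -- `L` and `C A` have the same gain, so the gain of `A L C` is the square of that of `A C`
    have hLCA : SemiconjBy ((nil z).gain ω f) ((C.append A).gain ω f) (L.gain ω f) :=
      hneg L (nil z) (C.append A) (by simp; omega) hLs
        (by simpa [hLs, mul_comm, neg_eq_iff_eq_neg] using hs)
    have hAC := gain_mul_self (ω := ω) (f := f) (W := A.append C)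
      (by simpa [hLs, neg_eq_iff_eq_neg] using hs)
    rw [SemiconjBy, gain_nil, one_mul, mul_one, gain_append] at hLCA
    rw [gain_append] at hAC
    rw [← hLCA, ← hAC]
    simp only [mul_assoc]

theorem IsTension.gain_eq_one_of_sgn_eq_one (hT : Γ.IsTension ω f) (hω : Γ.IsCompatible ω)
    {v : V} (W : Γ.Walk v v) (hs : W.sgn = 1) : W.gain ω f = 1 := by
  have key : ∀ n, Γ.PositiveGainsTrivial ω f n ∧ Γ.NegativeGainsConjugate ω f n := by
    intro n
    induction n with
    | zero => exact ⟨fun _ _ h => absurd h (Nat.not_lt_zero _),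
        fun _ _ _ _ _ h => absurd h (Nat.not_lt_zero _)⟩
    | succ n ih =>
      have hneg := NegativeGainsConjugate.succ hT hω ih.1 ih.2
      exact ⟨PositiveGainsTrivial.succ hT hω ih.1 hneg, hneg⟩
  exact (key (W.length + 1)).1 W (Nat.lt_succ_self _) hs

theorem IsPotentialDifference.edgeSum_mem_twoG (h : Γ.IsPotentialDifference ω f)
    (hω : Γ.IsCompatible ω) {v : V} (W : Γ.Walk v v) (hs : W.sgn = -1) :
    W.edgeSum f ∈ twoG G := by
  induction hn : W.length using Nat.strong_induction_on generalizing v with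
  | _ n ih =>
  by_cases hc : W.srcs.Nodup ∧ W.edges.Nodup
  · exact h.2 v W ⟨⟨List.ne_nil_of_length_pos (length_pos_of_sgn_eq_neg_one hs), hc⟩, hs⟩
  rcases exists_gain_eq_or_eq_append_append (f := f) hω W hc with
    ⟨W', hlen, hsgn, hgain⟩ | ⟨z, A, L, C, rfl, hL, hC⟩
  · have hT : W'.tensionSum ω f = W.tensionSum ω f := by
      simpa [gain_apply] using congrArg (· 0) hgain
    rw [W.edgeSum_mem_twoG_iff (ω := ω), ← hT, ← W'.edgeSum_mem_twoG_iff]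
    exact ih _ (by omega) W' (hsgn.trans hs) rfl
  have hsplit : (A.append (L.append C)).edgeSum f = L.edgeSum f + (C.append A).edgeSum f := by
    simp only [edgeSum_append]; abel
  have hpos {u : V} (X : Γ.Walk u u) (hX : X.sgn = 1) : X.edgeSum f ∈ twoG G := by
    rw [X.edgeSum_mem_twoG_iff (ω := ω),
      (gain_eq_one_iff hX).1 (h.1.gain_eq_one_of_sgn_eq_one hω X hX)]
    exact (twoG G).zero_mem
  simp only [length_append, sgn_append] at hn hs
  rw [hsplit]
  rcases Int.units_eq_one_or L.sgn with hLs | hLs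
  · exact (twoG G).add_mem (hpos L hLs)
      (ih _ (by simp; omega) (C.append A) (by simpa [hLs, mul_comm] using hs) rfl)
  · exact (twoG G).add_mem (ih _ (by omega) L hLs rfl)
      (hpos (C.append A) (by simpa [hLs, mul_comm, neg_eq_iff_eq_neg] using hs))

end SGraph

section Statement

open SGraph

theorem tension_iff_positive_closed_walks_general (V E : Type)
    (Γ : SGraph V E) (ω : E → Bool → ℤˣ) (hω : Γ.IsCompatible ω)
    (G : Type) [AddCommGroup G] (f : E → G) :
    (Γ.IsTension ω f ↔
      ∀ (v : V) (W : Γ.Walk v v), W.sgn = 1 → W.tensionSum ω f = 0) ∧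
    (Γ.IsPotentialDifference ω f ↔
      (Γ.IsTension ω f ∧
        ∀ (v : V) (W : Γ.Walk v v), W.sgn = -1 → W.edgeSum f ∈ twoG G)) := by
  refine ⟨⟨fun hT v W hs => ?_, fun h v W hW => h v W (sgn_of_isCircuitWalk hW)⟩,
    ⟨fun hPD => ⟨hPD.1, fun v W hs => hPD.edgeSum_mem_twoG hω W hs⟩,
      fun ⟨hT, h⟩ => ⟨hT, fun v W hW => h v W hW.2⟩⟩⟩
  exact (Walk.gain_eq_one_iff hs).1 (hT.gain_eq_one_of_sgn_eq_one hω W hs)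

/-- Proposition 7.5: `G`-tensions are characterized by the vanishing of the
alternating sum along every positive closed walk, and `G`-potential differences
by the additional condition that the edge sum along every negative closed walk
lies in `2G`. -/
theorem tension_iff_positive_closed_walks (V E : Type) [Finite V] [Finite E]
    (Γ : SGraph V E) (ω : E → Bool → ℤˣ) (hω : Γ.IsCompatible ω)
    (G : Type) [AddCommGroup G] [Finite G] (f : E → G) :
    (Γ.IsTension ω f ↔
      ∀ (v : V) (W : Γ.Walk v v), W.sgn = 1 → W.tensionSum ω f = 0) ∧
    (Γ.IsPotentialDifference ω f ↔
      (Γ.IsTension ω f ∧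
        ∀ (v : V) (W : Γ.Walk v v), W.sgn = -1 → W.edgeSum f ∈ twoG G)) :=
  tension_iff_positive_closed_walks_general V E Γ ω hω G f

end Statement
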